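/- arXiv:2402.04484 — 2 statements merged into one kernel-verified Lean document; each statement's English description precedes it below -/
import Mathlib

section
/- Let f₀ ≠ 0 and f₂ be real constants and let f(s) = f₀ s + f₂. If u : ℝ × ℝ → ℝ is a smooth solution of the generalized quasilinear KdV equation u_t + u² u_{xxx} + 4 u u_x u_{xx} + u_x³ + f₀ u_x = 0, then for every real ε the function v(t,x) := e^{3ε} u( t , e^{-2ε}(x − f₀ t) + f₀ t ) is also a solution of the same equation. -/
/-- Partial derivative with respect to the first (time) variable. -/
noncomputable def pdt (u : ℝ × ℝ → ℝ) (p : ℝ × ℝ) : ℝ :=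
  deriv (fun s => u (s, p.2)) p.1

/-- Partial derivative with respect to the second (space) variable. -/
noncomputable def pdx (u : ℝ × ℝ → ℝ) (p : ℝ × ℝ) : ℝ :=
  deriv (fun s => u (p.1, s)) p.2

/-- Left-hand side of the generalized quasilinear KdV equation
`u_t + u² u_{xxx} + 4 u u_x u_{xx} + u_x³ + f'(u) u_x`. -/
noncomputable def kdvLHS (f : ℝ → ℝ) (u : ℝ × ℝ → ℝ) (p : ℝ × ℝ) : ℝ :=
  pdt u p + (u p) ^ 2 * pdx (pdx (pdx u)) p + 4 * u p * pdx u p * pdx (pdx u) p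
    + (pdx u p) ^ 3 + deriv f (u p) * pdx u p

lemma pdx_eq_fderiv (w : ℝ × ℝ → ℝ) (hw : ContDiff ℝ (⊤ : ℕ∞) w) (q : ℝ × ℝ) :
    pdx w q = fderiv ℝ w q ((0 : ℝ), (1 : ℝ)) := by
  have h1 : HasDerivAt (fun s : ℝ => ((q.1 : ℝ), s)) ((0 : ℝ), (1 : ℝ)) q.2 :=
    (hasDerivAt_const q.2 q.1).prodMk (hasDerivAt_id q.2)
  have h2 := ((hw.differentiable (by simp) q).hasFDerivAt).comp_hasDerivAt q.2
    (by simpa using h1)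
  simpa [pdx, Function.comp_def] using h2.deriv

lemma pdt_eq_fderiv (w : ℝ × ℝ → ℝ) (hw : ContDiff ℝ (⊤ : ℕ∞) w) (q : ℝ × ℝ) :
    pdt w q = fderiv ℝ w q ((1 : ℝ), (0 : ℝ)) := by
  have h1 : HasDerivAt (fun s : ℝ => (s, (q.2 : ℝ))) ((1 : ℝ), (0 : ℝ)) q.1 :=
    (hasDerivAt_id q.1).prodMk (hasDerivAt_const q.1 q.2)
  have h2 := ((hw.differentiable (by simp) q).hasFDerivAt).comp_hasDerivAt q.1
    (by simpa using h1)
  simpa [pdt, Function.comp_def] using h2.deriv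

lemma pdx_contDiff (w : ℝ × ℝ → ℝ) (hw : ContDiff ℝ (⊤ : ℕ∞) w) : ContDiff ℝ (⊤ : ℕ∞) (pdx w) := by
  have h : pdx w = fun q => fderiv ℝ w q ((0 : ℝ), (1 : ℝ)) := funext (pdx_eq_fderiv w hw)
  rw [h]
  exact (hw.fderiv_right (by simp)).clm_apply contDiff_const

lemma key_pdx (w : ℝ × ℝ → ℝ) (hw : ContDiff ℝ (⊤ : ℕ∞) w) (k a f₀ : ℝ) (p : ℝ × ℝ) :
    pdx (fun q : ℝ × ℝ => k * w (q.1, a * (q.2 - f₀ * q.1) + f₀ * q.1)) p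
      = k * a * pdx w (p.1, a * (p.2 - f₀ * p.1) + f₀ * p.1) := by
  set x₀ : ℝ := a * (p.2 - f₀ * p.1) + f₀ * p.1 with hx₀
  have hdiff : Differentiable ℝ (fun s : ℝ => w (p.1, s)) :=
    (hw.differentiable (by simp)).comp ((differentiable_const p.1).prodMk differentiable_id)
  have houter : HasDerivAt (fun s : ℝ => w (p.1, s)) (pdx w (p.1, x₀)) x₀ := by
    simpa [pdx] using (hdiff x₀).hasDerivAt
  have hinner : HasDerivAt (fun s : ℝ => a * (s - f₀ * p.1) + f₀ * p.1) a p.2 := by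
    simpa using (((hasDerivAt_id p.2).sub_const (f₀ * p.1)).const_mul a).add_const (f₀ * p.1)
  have h := (houter.comp p.2 hinner).const_mul k
  have := h.deriv
  simp only [pdx, Function.comp] at this ⊢
  rw [this]; ring

lemma fderiv_split (w : ℝ × ℝ → ℝ) (hw : ContDiff ℝ (⊤ : ℕ∞) w) (q : ℝ × ℝ) (c₂ : ℝ) :
    fderiv ℝ w q ((1 : ℝ), c₂) = pdt w q + c₂ * pdx w q := by
  have h : ((1 : ℝ), c₂) = ((1 : ℝ), (0 : ℝ)) + c₂ • ((0 : ℝ), (1 : ℝ)) := by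
    simp [Prod.ext_iff]
  rw [h, map_add, map_smul, pdt_eq_fderiv w hw, pdx_eq_fderiv w hw]
  simp [smul_eq_mul]

lemma key_pdt (w : ℝ × ℝ → ℝ) (hw : ContDiff ℝ (⊤ : ℕ∞) w) (k a f₀ : ℝ) (p : ℝ × ℝ) :
    pdt (fun q : ℝ × ℝ => k * w (q.1, a * (q.2 - f₀ * q.1) + f₀ * q.1)) p
      = k * (pdt w (p.1, a * (p.2 - f₀ * p.1) + f₀ * p.1)
        + (f₀ - a * f₀) * pdx w (p.1, a * (p.2 - f₀ * p.1) + f₀ * p.1)) := by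
  have hγ : HasDerivAt (fun s : ℝ => ((s : ℝ), a * (p.2 - f₀ * s) + f₀ * s))
      ((1 : ℝ), f₀ - a * f₀) p.1 := by
    have h2 : HasDerivAt (fun s : ℝ => a * (p.2 - f₀ * s) + f₀ * s) (f₀ - a * f₀) p.1 := by
      have := (((hasDerivAt_const p.1 p.2).sub ((hasDerivAt_id p.1).const_mul f₀)).const_mul
        a).add ((hasDerivAt_id p.1).const_mul f₀)
      exact this.congr_deriv (by ring)
    exact (hasDerivAt_id p.1).prodMk h2
  have hF := ((hw.differentiable (by simp)
      ((p.1 : ℝ), a * (p.2 - f₀ * p.1) + f₀ * p.1)).hasFDerivAt).comp_hasDerivAt p.1 hγ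
  have h := hF.const_mul k
  have hd := h.deriv
  simp only [pdt, Function.comp] at hd ⊢
  rw [hd, fderiv_split w hw]
  rfl

/-- The symmetry generated by `X₄ = 2(x − f₀ t) ∂_x + 3u ∂_u` maps smooth solutions of
the generalized quasilinear KdV equation with `f(u) = f₀ u + f₂` (so that `f'(u) = f₀`)
to solutions. -/
theorem symmetry_linear_f (f₀ f₂ : ℝ) (hf₀ : f₀ ≠ 0) (f : ℝ → ℝ)
    (hf : ∀ s : ℝ, f s = f₀ * s + f₂)
    (u : ℝ × ℝ → ℝ) (hu : ContDiff ℝ (⊤ : ℕ∞) u)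
    (hsol : ∀ p : ℝ × ℝ, pdt u p + (u p) ^ 2 * pdx (pdx (pdx u)) p
      + 4 * u p * pdx u p * pdx (pdx u) p + (pdx u p) ^ 3 + f₀ * pdx u p = 0)
    (ε : ℝ) (v : ℝ × ℝ → ℝ)
    (hv : ∀ q : ℝ × ℝ, v q = Real.exp (3 * ε) *
      u (q.1, Real.exp (-2 * ε) * (q.2 - f₀ * q.1) + f₀ * q.1)) :
    ∀ p : ℝ × ℝ, pdt v p + (v p) ^ 2 * pdx (pdx (pdx v)) p
      + 4 * v p * pdx v p * pdx (pdx v) p + (pdx v p) ^ 3 + f₀ * pdx v p = 0 := by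
  intro p
  set c : ℝ := Real.exp (3 * ε) with hc
  set a : ℝ := Real.exp (-2 * ε) with ha
  have hveq : v = fun q : ℝ × ℝ => c * u (q.1, a * (q.2 - f₀ * q.1) + f₀ * q.1) :=
    funext fun q => hv q
  subst hveq
  have hu1 : ContDiff ℝ (⊤ : ℕ∞) (pdx u) := pdx_contDiff u hu
  have hu2 : ContDiff ℝ (⊤ : ℕ∞) (pdx (pdx u)) := pdx_contDiff _ hu1
  have h1 : (pdx fun q : ℝ × ℝ => c * u (q.1, a * (q.2 - f₀ * q.1) + f₀ * q.1))
      = fun q : ℝ × ℝ => (c * a) * pdx u (q.1, a * (q.2 - f₀ * q.1) + f₀ * q.1) :=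
    funext fun q => key_pdx u hu c a f₀ q
  have h2 : (pdx fun q : ℝ × ℝ => (c * a) * pdx u (q.1, a * (q.2 - f₀ * q.1) + f₀ * q.1))
      = fun q : ℝ × ℝ => (c * a * a) * pdx (pdx u) (q.1, a * (q.2 - f₀ * q.1) + f₀ * q.1) := by
    funext q
    rw [key_pdx (pdx u) hu1 (c * a) a f₀ q]
  have h3 : (pdx fun q : ℝ × ℝ =>
        (c * a * a) * pdx (pdx u) (q.1, a * (q.2 - f₀ * q.1) + f₀ * q.1))
      = fun q : ℝ × ℝ =>
        (c * a * a * a) * pdx (pdx (pdx u)) (q.1, a * (q.2 - f₀ * q.1) + f₀ * q.1) := by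
    funext q
    rw [key_pdx (pdx (pdx u)) hu2 (c * a * a) a f₀ q]
  have ht := key_pdt u hu c a f₀ p
  set T : ℝ × ℝ := ((p.1 : ℝ), a * (p.2 - f₀ * p.1) + f₀ * p.1) with hT
  have hs := hsol T
  have hca : c ^ 2 * a ^ 3 = 1 := by
    rw [hc, ha, show (Real.exp (3 * ε)) ^ 2 * (Real.exp (-2 * ε)) ^ 3
      = Real.exp (3 * ε + 3 * ε) * Real.exp (-2 * ε + (-2 * ε + -2 * ε)) by
        rw [Real.exp_add, Real.exp_add, Real.exp_add]; ring,
      ← Real.exp_add, show 3 * ε + 3 * ε + (-2 * ε + (-2 * ε + -2 * ε)) = 0 by ring,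
      Real.exp_zero]
  simp only [h1, h2, h3, ht]
  linear_combination c * hs + c * ((u T) ^ 2 * pdx (pdx (pdx u)) T
    + 4 * u T * pdx u T * pdx (pdx u) T + (pdx u T) ^ 3) * hca
end

section
/- Let f₀ ≠ 0, f₁, f₂ be real constants and let f(s) = f₀ ln s + f₁ s + f₂ for s > 0. If u : ℝ × ℝ → ℝ is a smooth positive solution of the generalized quasilinear KdV equation u_t + u² u_{xxx} + 4 u u_x u_{xx} + u_x³ + f'(u) u_x = 0 (where f'(s) = f₀/s + f₁), then for every real ε the function v(t,x) := e^{2ε} u( e^{-5ε} t , e^{-3ε} x + f₁ (e^{-5ε} − e^{-3ε}) t ) is also a smooth positive solution of the same equation. -/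
/-- Left-hand side of the generalized quasilinear KdV equation
`u_t + u² u_{xxx} + 4 u u_x u_{xx} + u_x³ + f'(u) u_x`. -/
lemma pdx_eq_fderiv_s5 {u : ℝ × ℝ → ℝ} (hu : Differentiable ℝ u) (p : ℝ × ℝ) :
    pdx u p = fderiv ℝ u p (0, 1) := by
  have h1 : HasDerivAt (fun s : ℝ => ((p.1, s) : ℝ × ℝ)) (0, 1) p.2 :=
    (hasDerivAt_const _ _).prodMk (hasDerivAt_id _)
  have h : HasDerivAt (fun s => u (p.1, s)) (fderiv ℝ u p (0, 1)) p.2 := by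
    exact (hu p).hasFDerivAt.comp_hasDerivAt p.2 h1
  exact h.deriv

lemma pdt_eq_fderiv_s5 {u : ℝ × ℝ → ℝ} (hu : Differentiable ℝ u) (p : ℝ × ℝ) :
    pdt u p = fderiv ℝ u p (1, 0) := by
  have h1 : HasDerivAt (fun s : ℝ => ((s, p.2) : ℝ × ℝ)) (1, 0) p.1 :=
    (hasDerivAt_id _).prodMk (hasDerivAt_const _ _)
  have h : HasDerivAt (fun s => u (s, p.2)) (fderiv ℝ u p (1, 0)) p.1 := by
    exact (hu p).hasFDerivAt.comp_hasDerivAt p.1 h1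
  exact h.deriv

lemma pdx_comp (w : ℝ × ℝ → ℝ) (hw : Differentiable ℝ w) (c a b d : ℝ) (q : ℝ × ℝ) :
    pdx (fun q => c * w (a * q.1, b * q.2 + d * q.1)) q
      = c * b * pdx w (a * q.1, b * q.2 + d * q.1) := by
  have hg : ∀ y : ℝ, HasDerivAt (fun s : ℝ => w (a * q.1, s))
      (fderiv ℝ w (a * q.1, y) (0, 1)) y := fun y => by
    have h1 : HasDerivAt (fun s : ℝ => ((a * q.1, s) : ℝ × ℝ)) (0, 1) y :=
      (hasDerivAt_const _ _).prodMk (hasDerivAt_id _)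
    exact (hw _).hasFDerivAt.comp_hasDerivAt y h1
  have hlin : HasDerivAt (fun s : ℝ => b * s + d * q.1) b q.2 := by
    simpa using ((hasDerivAt_id q.2).const_mul b).add_const (d * q.1)
  have hcomp : HasDerivAt (fun s : ℝ => w (a * q.1, b * s + d * q.1))
      (fderiv ℝ w (a * q.1, b * q.2 + d * q.1) (0, 1) * b) q.2 :=
    HasDerivAt.comp q.2 (hg _) hlin
  have h := (hcomp.const_mul c).deriv
  show deriv (fun s : ℝ => c * w (a * q.1, b * s + d * q.1)) q.2 = _
  rw [h, pdx_eq_fderiv_s5 hw]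
  ring

lemma pdt_comp (w : ℝ × ℝ → ℝ) (hw : Differentiable ℝ w) (c a b d : ℝ) (q : ℝ × ℝ) :
    pdt (fun q => c * w (a * q.1, b * q.2 + d * q.1)) q
      = c * (a * pdt w (a * q.1, b * q.2 + d * q.1)
          + d * pdx w (a * q.1, b * q.2 + d * q.1)) := by
  have hγ : HasDerivAt (fun s : ℝ => ((a * s, b * q.2 + d * s) : ℝ × ℝ)) (a, d) q.1 := by
    have h1 : HasDerivAt (fun s : ℝ => a * s) a q.1 := by
      simpa using (hasDerivAt_id q.1).const_mul a
    have h2 : HasDerivAt (fun s : ℝ => b * q.2 + d * s) d q.1 := by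
      simpa using ((hasDerivAt_id q.1).const_mul d).const_add (b * q.2)
    exact h1.prodMk h2
  have hcomp : HasDerivAt (fun s : ℝ => w (a * s, b * q.2 + d * s))
      (fderiv ℝ w (a * q.1, b * q.2 + d * q.1) (a, d)) q.1 := by
    exact (hw _).hasFDerivAt.comp_hasDerivAt q.1 hγ
  have hsplit : fderiv ℝ w (a * q.1, b * q.2 + d * q.1) ((a, d) : ℝ × ℝ)
      = a * fderiv ℝ w (a * q.1, b * q.2 + d * q.1) (1, 0)
        + d * fderiv ℝ w (a * q.1, b * q.2 + d * q.1) (0, 1) := by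
    have hv : ((a, d) : ℝ × ℝ) = a • ((1, 0) : ℝ × ℝ) + d • ((0, 1) : ℝ × ℝ) := by
      simp [Prod.ext_iff]
    rw [hv, map_add, map_smul, map_smul, smul_eq_mul, smul_eq_mul]
  have h := (hcomp.const_mul c).deriv
  show deriv (fun s : ℝ => c * w (a * s, b * q.2 + d * s)) q.1 = _
  rw [h, hsplit, pdt_eq_fderiv_s5 hw, pdx_eq_fderiv_s5 hw]

lemma contDiff_pdx {u : ℝ × ℝ → ℝ} (hu : ContDiff ℝ (⊤ : ℕ∞) u) : ContDiff ℝ (⊤ : ℕ∞) (pdx u) := by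
  have : pdx u = fun p => fderiv ℝ u p (0, 1) :=
    funext (pdx_eq_fderiv_s5 (hu.differentiable (by simp)))
  rw [this]
  exact (hu.fderiv_right (by simp)).clm_apply contDiff_const

/-- The symmetry generated by `X₆ = 5t ∂_t + (3x + 2f₁ t) ∂_x + 2u ∂_u` maps smooth
positive solutions of the generalized quasilinear KdV equation with
`f(u) = f₀ ln u + f₁ u + f₂` (so that `f'(u) = f₀/u + f₁`) to smooth positive
solutions. -/
theorem symmetry_log_u (f₀ f₁ f₂ : ℝ) (hf₀ : f₀ ≠ 0) (f : ℝ → ℝ)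
    (hf : ∀ s : ℝ, 0 < s → f s = f₀ * Real.log s + f₁ * s + f₂)
    (u : ℝ × ℝ → ℝ) (hu : ContDiff ℝ (⊤ : ℕ∞) u) (hupos : ∀ p : ℝ × ℝ, 0 < u p)
    (hsol : ∀ p : ℝ × ℝ, pdt u p + (u p) ^ 2 * pdx (pdx (pdx u)) p
      + 4 * u p * pdx u p * pdx (pdx u) p + (pdx u p) ^ 3
      + (f₀ / u p + f₁) * pdx u p = 0)
    (ε : ℝ) (v : ℝ × ℝ → ℝ)
    (hv : ∀ q : ℝ × ℝ, v q = Real.exp (2 * ε) *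
      u (Real.exp (-5 * ε) * q.1,
         Real.exp (-3 * ε) * q.2 + f₁ * (Real.exp (-5 * ε) - Real.exp (-3 * ε)) * q.1)) :
    ContDiff ℝ (⊤ : ℕ∞) v ∧ (∀ q : ℝ × ℝ, 0 < v q) ∧
      (∀ p : ℝ × ℝ, pdt v p + (v p) ^ 2 * pdx (pdx (pdx v)) p
        + 4 * v p * pdx v p * pdx (pdx v) p + (pdx v p) ^ 3
        + (f₀ / v p + f₁) * pdx v p = 0) := by
  set a := Real.exp (-5 * ε) with ha
  set b := Real.exp (-3 * ε) with hb
  set c := Real.exp (2 * ε) with hc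
  set d := f₁ * (a - b) with hd
  have hvfun : v = fun q : ℝ × ℝ => c * u (a * q.1, b * q.2 + d * q.1) := by
    funext q; rw [hv q]
  have hud : Differentiable ℝ u := hu.differentiable (by simp)
  have hux : ContDiff ℝ (⊤ : ℕ∞) (pdx u) := contDiff_pdx hu
  have huxx : ContDiff ℝ (⊤ : ℕ∞) (pdx (pdx u)) := contDiff_pdx hux
  have hφ : ContDiff ℝ (⊤ : ℕ∞) (fun q : ℝ × ℝ => ((a * q.1, b * q.2 + d * q.1) : ℝ × ℝ)) :=
    ((contDiff_const.mul contDiff_fst).prodMk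
      ((contDiff_const.mul contDiff_snd).add (contDiff_const.mul contDiff_fst)))
  have hcv : ContDiff ℝ (⊤ : ℕ∞) v := by
    rw [hvfun]; exact contDiff_const.mul (hu.comp hφ)
  refine ⟨hcv, ?_, ?_⟩
  · intro q
    rw [hv q]
    exact mul_pos (Real.exp_pos _) (hupos _)
  · intro p
    have hA : ∀ q : ℝ × ℝ, pdx v q = c * b * pdx u (a * q.1, b * q.2 + d * q.1) := by
      intro q; rw [hvfun]; exact pdx_comp u hud c a b d q
    have hAfun : pdx v = fun q : ℝ × ℝ => c * b * pdx u (a * q.1, b * q.2 + d * q.1) :=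
      funext hA
    have hB : ∀ q : ℝ × ℝ,
        pdx (pdx v) q = c * b * b * pdx (pdx u) (a * q.1, b * q.2 + d * q.1) := by
      intro q
      rw [hAfun, pdx_comp (pdx u) (hux.differentiable (by simp)) (c * b) a b d q]
    have hBfun : pdx (pdx v)
        = fun q : ℝ × ℝ => c * b * b * pdx (pdx u) (a * q.1, b * q.2 + d * q.1) :=
      funext hB
    have hC : pdx (pdx (pdx v)) p
        = c * b * b * b * pdx (pdx (pdx u)) (a * p.1, b * p.2 + d * p.1) := by
      rw [hBfun]
      have := pdx_comp (pdx (pdx u)) (huxx.differentiable (by simp)) (c * b * b) a b d p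
      rw [this]
    have hD : pdt v p = c * (a * pdt u (a * p.1, b * p.2 + d * p.1)
        + d * pdx u (a * p.1, b * p.2 + d * p.1)) := by
      rw [hvfun]; exact pdt_comp u hud c a b d p
    set P : ℝ × ℝ := (a * p.1, b * p.2 + d * p.1) with hP
    have hUpos := hupos P
    have hUne : u P ≠ 0 := ne_of_gt hUpos
    have hUt : pdt u P = -((u P) ^ 2 * pdx (pdx (pdx u)) P
        + 4 * u P * pdx u P * pdx (pdx u) P + (pdx u P) ^ 3
        + (f₀ / u P + f₁) * pdx u P) := by
      have := hsol P; linarith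
    have hEne : Real.exp ε ≠ 0 := Real.exp_ne_zero ε
    have hea : a = (Real.exp ε ^ 5)⁻¹ := by
      rw [ha, show (-5 : ℝ) * ε = -(5 * ε) by ring, Real.exp_neg,
        show (5 : ℝ) * ε = ((5 : ℕ) : ℝ) * ε by norm_num, Real.exp_nat_mul]
    have heb : b = (Real.exp ε ^ 3)⁻¹ := by
      rw [hb, show (-3 : ℝ) * ε = -(3 * ε) by ring, Real.exp_neg,
        show (3 : ℝ) * ε = ((3 : ℕ) : ℝ) * ε by norm_num, Real.exp_nat_mul]
    have hec : c = Real.exp ε ^ 2 := by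
      rw [hc, show (2 : ℝ) * ε = ((2 : ℕ) : ℝ) * ε by norm_num, Real.exp_nat_mul]
    rw [hv p, hA p, hB p, hC, hD]
    show c * (a * pdt u P + d * pdx u P)
        + (c * u P) ^ 2 * (c * b * b * b * pdx (pdx (pdx u)) P)
        + 4 * (c * u P) * (c * b * pdx u P) * (c * b * b * pdx (pdx u) P)
        + (c * b * pdx u P) ^ 3 + (f₀ / (c * u P) + f₁) * (c * b * pdx u P) = 0
    rw [hUt, hd, hea, heb, hec]
    field_simp
    ring
end
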